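/- Let M = ℕ₀ \ {1} (the additive monoid of nonnegative integers except 1) and let N = {(0,0)} ∪ (ℤ × ℕ), an additive submonoid of ℤ². Then the direct product monoid M × N is atomic and is a PLS monoid (the atom (2,(0,0)) is purely long and the atom (3,(0,0)) is purely short), but M × N is not a finite factorization monoid: the infinitely many atoms (0,(n,1)), n ∈ ℤ, all divide the element (0,(0,2)) in M × N. -/

import Mathlib

/-!
The atoms of `M × N` are `(2,0)`, `(3,0)` and `(0,(n,1))`. The additive map `(m,p) ↦ m + 3 p₂`
gives every atom weight `3` except `(2,0)`, which weighs `2`; comparing the weights of the two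
sides of an irredundant relation in which only the left side contains `(2,0)` shows that the left
side is longer. Dually `(m,p) ↦ m + 2 p₂` gives every atom weight `2` except `(3,0)`, which weighs
`3`, so a side containing `(3,0)` is shorter. Neither atom is prime since `1 ∉ M`: `2 ∣ 3 + 3` and
`3 ∣ 4 + 4` in `M`, but `2 ∤ 3` and `3 ∤ 4`. Finally `(0,(n,1)) + (0,(-n,1)) = (0,(0,2))` for every
`n`, whereas in a finite factorization monoid without nontrivial units an element has only
finitely many atom divisors.
-/

section Defs

variable {M : Type*} [AddCommMonoid M]

/-- `a` is an atom (irreducible element) of the additive monoid `M`. -/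
def IsAddAtom (a : M) : Prop :=
  ¬IsAddUnit a ∧ ∀ x y : M, a = x + y → IsAddUnit x ∨ IsAddUnit y

/-- `a` divides `x` in the additive monoid `M`. -/
def AddDvd (a x : M) : Prop := ∃ c : M, x = a + c

/-- `a` is a prime element of the additive monoid `M`. -/
def IsAddPrime (a : M) : Prop :=
  ¬IsAddUnit a ∧ ∀ x y : M, AddDvd a (x + y) → AddDvd a x ∨ AddDvd a y

/-- `z` is a factorization of `x`: a multiset of atoms whose sum is `x`. -/
def IsFactorizationOf (z : Multiset M) (x : M) : Prop :=
  (∀ a ∈ z, IsAddAtom a) ∧ z.sum = x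

/-- `M` is atomic: every non-invertible element is a sum of atoms. -/
def IsAddAtomic (M : Type*) [AddCommMonoid M] : Prop :=
  ∀ x : M, ¬IsAddUnit x → ∃ z : Multiset M, IsFactorizationOf z x

/-- `M` is a finite factorization monoid: it is atomic and every element has only
finitely many factorizations. -/
def IsFFM (M : Type*) [AddCommMonoid M] : Prop :=
  IsAddAtomic M ∧ ∀ x : M, {z : Multiset M | IsFactorizationOf z x}.Finite

/-- A pair of factorizations is irredundant if no atom appears in both. -/
def Irredundant (z₁ z₂ : Multiset M) : Prop := ∀ a ∈ z₁, a ∉ z₂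

/-- `a` is a purely long atom of `M`. -/
def IsPurelyLong (a : M) : Prop :=
  IsAddAtom a ∧ ¬IsAddPrime a ∧
    ∀ (x : M) (z₁ z₂ : Multiset M), IsFactorizationOf z₁ x → IsFactorizationOf z₂ x →
      Irredundant z₁ z₂ → a ∈ z₁ → Multiset.card z₂ < Multiset.card z₁

/-- `a` is a purely short atom of `M`. -/
def IsPurelyShort (a : M) : Prop :=
  IsAddAtom a ∧ ¬IsAddPrime a ∧
    ∀ (x : M) (z₁ z₂ : Multiset M), IsFactorizationOf z₁ x → IsFactorizationOf z₂ x →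
      Irredundant z₁ z₂ → a ∈ z₁ → Multiset.card z₁ < Multiset.card z₂

end Defs

/-- The additive monoid `M = ℕ₀ \ {1}`, as a submonoid of `ℕ`. -/
def Mnum : AddSubmonoid ℕ where
  carrier := {k : ℕ | k ≠ 1}
  zero_mem' := by simp
  add_mem' := by
    intro a b ha hb
    simp only [Set.mem_setOf_eq] at *
    omega

/-- The additive monoid `N = {(0,0)} ∪ (ℤ × ℕ)`, as a submonoid of `ℤ²`. -/
def Nsub : AddSubmonoid (ℤ × ℤ) where
  carrier := {p : ℤ × ℤ | p = 0 ∨ 0 < p.2}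
  zero_mem' := Or.inl rfl
  add_mem' := by
    rintro p q (rfl | hp) hq
    · simpa using hq
    · rcases hq with rfl | hq
      · exact Or.inr (by simpa using hp)
      · exact Or.inr (by simpa using add_pos hp hq)

/-- The direct product monoid `M × N` of Example 3.4. -/
abbrev MN : Type := ↥Mnum × ↥Nsub

/-- The atom `(2, (0,0))` of `M × N`. -/
def aTwo : MN := (⟨2, show (2:ℕ) ≠ 1 by decide⟩, 0)

/-- The atom `(3, (0,0))` of `M × N`. -/
def aThree : MN := (⟨3, show (3:ℕ) ≠ 1 by decide⟩, 0)

/-- The atom `(0, (n,1))` of `M × N`, for `n : ℤ`. -/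
def en1 (n : ℤ) : MN := (0, ⟨(n, 1), Or.inr one_pos⟩)

/-- The element `(0, (0,2))` of `M × N`. -/
def x02 : MN := (0, ⟨(0, 2), Or.inr (by norm_num)⟩)

section General

variable {M N : Type*} [AddCommMonoid M] [AddCommMonoid N]

theorem Prod.isAddAtom_iff [Subsingleton (AddUnits M)] [Subsingleton (AddUnits N)] {x : M × N} :
    IsAddAtom x ↔ IsAddAtom x.1 ∧ x.2 = 0 ∨ x.1 = 0 ∧ IsAddAtom x.2 := by
  obtain ⟨a, b⟩ := x
  simp only [IsAddAtom, isAddUnit_iff_eq_zero, Prod.forall, Prod.mk_add_mk, Prod.mk.injEq,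
    Prod.mk_eq_zero]
  constructor
  · rintro ⟨hab, hsplit⟩
    rcases hsplit a 0 0 b ⟨by simp, by simp⟩ with ⟨rfl, -⟩ | ⟨-, rfl⟩
    · refine .inr ⟨rfl, fun hb => hab ⟨rfl, hb⟩, fun y z hyz => ?_⟩
      simpa using hsplit 0 y 0 z ⟨by simp, hyz⟩
    · refine .inl ⟨⟨fun ha => hab ⟨ha, rfl⟩, fun y z hyz => ?_⟩, rfl⟩
      simpa using hsplit y 0 z 0 ⟨hyz, by simp⟩
  · rintro (⟨⟨ha, hsplit⟩, rfl⟩ | ⟨rfl, hb, hsplit⟩)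
    · refine ⟨fun h => ha h.1, fun y₁ y₂ z₁ z₂ ⟨h₁, h₂⟩ => ?_⟩
      obtain ⟨rfl, rfl⟩ := add_eq_zero.mp h₂.symm
      simpa using hsplit y₁ z₁ h₁
    · refine ⟨fun h => hb h.2, fun y₁ y₂ z₁ z₂ ⟨h₁, h₂⟩ => ?_⟩
      obtain ⟨rfl, rfl⟩ := add_eq_zero.mp h₁.symm
      simpa using hsplit y₂ z₂ h₂

theorem isAddAtomic_of_pos_hom (h : M →+ ℤ) (hpos : ∀ x, x ≠ 0 → 0 < h x) : IsAddAtomic M := by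
  have hpos' : ∀ x, ¬IsAddUnit x → 0 < h x := fun x hx => hpos x (by rintro rfl; simp at hx)
  intro x hx
  induction hn : (h x).toNat using Nat.strong_induction_on generalizing x with
  | _ n ih =>
  by_cases hatom : IsAddAtom x
  · exact ⟨{x}, by simpa using hatom, by simp⟩
  obtain ⟨y, z, rfl, hy, hz⟩ : ∃ y z, x = y + z ∧ ¬IsAddUnit y ∧ ¬IsAddUnit z := by
    simpa [IsAddAtom, hx] using hatom
  have hy₀ := hpos' y hy
  have hz₀ := hpos' z hz
  rw [map_add] at hn
  obtain ⟨zy, hzy, rfl⟩ := ih _ (by omega) y hy rfl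
  obtain ⟨zz, hzz, rfl⟩ := ih _ (by omega) z hz rfl
  exact ⟨zy + zz, by simpa [or_imp, forall_and] using ⟨hzy, hzz⟩, by simp⟩

theorem IsFFM.finite_setOf_isAddAtom_addDvd [Subsingleton (AddUnits M)] (hM : IsFFM M) (x : M) :
    {a : M | IsAddAtom a ∧ AddDvd a x}.Finite := by
  refine ((hM.2 x).biUnion fun z _ => z.finite_toSet).subset ?_
  rintro a ⟨ha, c, rfl⟩
  obtain rfl | hc := eq_or_ne c 0
  · exact Set.mem_biUnion (x := {a}) ⟨by simpa using ha, by simp⟩ (by simp)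
  · obtain ⟨z, hz, rfl⟩ := hM.1 c (by simpa using hc)
    refine Set.mem_biUnion (x := a ::ₘ z) ⟨?_, by simp⟩ (by simp)
    simpa [ha] using hz

end General

section Weight

variable {M : Type*} [AddCommMonoid M] (φ : M →+ ℤ) {a : M} {c : ℤ}

theorem map_multisetSum_of_forall_isAddAtom [DecidableEq M]
    (hφ : ∀ b, IsAddAtom b → b ≠ a → φ b = c) {z : Multiset M} (hz : ∀ b ∈ z, IsAddAtom b) :
    φ z.sum = c * Multiset.card z + (φ a - c) * z.count a := by
  induction z using Multiset.induction with
  | empty => simp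
  | cons b z ih =>
    rw [Multiset.forall_mem_cons] at hz
    rw [Multiset.sum_cons, map_add, ih hz.2, Multiset.card_cons, Multiset.count_cons]
    obtain rfl | hb := eq_or_ne b a
    · simp only [if_true]
      push_cast
      ring
    · simp only [hφ b hz.1 hb, if_neg hb.symm]
      push_cast
      ring

variable {x : M} {z₁ z₂ : Multiset M}

theorem mul_card_sub_card_of_forall_isAddAtom [DecidableEq M]
    (hφ : ∀ b, IsAddAtom b → b ≠ a → φ b = c) (h₁ : IsFactorizationOf z₁ x)
    (h₂ : IsFactorizationOf z₂ x) (ha₂ : a ∉ z₂) :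
    c * ((Multiset.card z₁ : ℤ) - Multiset.card z₂) = (c - φ a) * z₁.count a := by
  have e₁ := map_multisetSum_of_forall_isAddAtom φ hφ h₁.1
  have e₂ := map_multisetSum_of_forall_isAddAtom φ hφ h₂.1
  rw [h₁.2] at e₁
  rw [h₂.2, Multiset.count_eq_zero.mpr ha₂, Nat.cast_zero, mul_zero, add_zero] at e₂
  linarith

theorem card_lt_card_of_weight_lt (hc : 0 < c) (hlt : φ a < c)
    (hφ : ∀ b, IsAddAtom b → b ≠ a → φ b = c) (h₁ : IsFactorizationOf z₁ x)
    (h₂ : IsFactorizationOf z₂ x) (ha₁ : a ∈ z₁) (ha₂ : a ∉ z₂) :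
    Multiset.card z₂ < Multiset.card z₁ := by
  classical
  have key := mul_card_sub_card_of_forall_isAddAtom φ hφ h₁ h₂ ha₂
  have hcount : (0 : ℤ) < z₁.count a := by exact_mod_cast Multiset.count_pos.mpr ha₁
  have : (Multiset.card z₂ : ℤ) < Multiset.card z₁ := by nlinarith
  exact_mod_cast this

theorem card_lt_card_of_lt_weight (hc : 0 < c) (hlt : c < φ a)
    (hφ : ∀ b, IsAddAtom b → b ≠ a → φ b = c) (h₁ : IsFactorizationOf z₁ x)
    (h₂ : IsFactorizationOf z₂ x) (ha₁ : a ∈ z₁) (ha₂ : a ∉ z₂) :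
    Multiset.card z₁ < Multiset.card z₂ := by
  classical
  have key := mul_card_sub_card_of_forall_isAddAtom φ hφ h₁ h₂ ha₂
  have hcount : (0 : ℤ) < z₁.count a := by exact_mod_cast Multiset.count_pos.mpr ha₁
  have : (Multiset.card z₁ : ℤ) < Multiset.card z₂ := by nlinarith
  exact_mod_cast this

end Weight

namespace Mnum

theorem mem_iff {m : ℕ} : m ∈ Mnum ↔ m ≠ 1 := Iff.rfl

instance : Subsingleton (AddUnits Mnum) :=
  .addUnits_of_isAddUnit fun _ hm => Subtype.ext (hm.map Mnum.subtype).eq_zero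

theorem isAddAtom_iff {m : Mnum} : IsAddAtom m ↔ (m : ℕ) = 2 ∨ (m : ℕ) = 3 := by
  obtain ⟨m, hm⟩ := m
  simp only [IsAddAtom, isAddUnit_iff_eq_zero, Subtype.forall,
    Subtype.ext_iff, AddSubmonoid.coe_add, ZeroMemClass.coe_zero, mem_iff] at hm ⊢
  constructor
  · rintro ⟨hm₀, hsplit⟩
    by_contra h
    have := hsplit 2 (by decide) (m - 2) (by omega) (by omega)
    omega
  · intro h
    exact ⟨by omega, fun x hx y hy hxy => by omega⟩

end Mnum

namespace Nsub

theorem snd_nonneg (p : Nsub) : 0 ≤ (p : ℤ × ℤ).2 := by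
  rcases p.2 with hp | hp
  · simp [hp]
  · exact hp.le

theorem eq_zero_iff {p : Nsub} : p = 0 ↔ (p : ℤ × ℤ).2 = 0 := by
  refine ⟨by rintro rfl; rfl, fun hp => Subtype.ext ?_⟩
  rcases p.2 with h | h
  · exact h
  · omega

instance : Subsingleton (AddUnits Nsub) := by
  refine .addUnits_of_isAddUnit fun p hp => ?_
  obtain ⟨q, hpq⟩ := hp.exists_neg
  have := congrArg (fun r : Nsub => (r : ℤ × ℤ).2) hpq
  have := snd_nonneg p
  have := snd_nonneg q
  simp only [AddSubmonoid.coe_add, Prod.snd_add, ZeroMemClass.coe_zero, Prod.snd_zero] at *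
  exact eq_zero_iff.mpr (by omega)

theorem isAddAtom_iff {p : Nsub} : IsAddAtom p ↔ (p : ℤ × ℤ).2 = 1 := by
  simp only [IsAddAtom, isAddUnit_iff_eq_zero, eq_zero_iff]
  constructor
  · rintro ⟨hp₀, hsplit⟩
    by_contra h
    have := snd_nonneg p
    have := hsplit ⟨((p : ℤ × ℤ).1, (p : ℤ × ℤ).2 - 1), Or.inr (by simp; omega)⟩
      ⟨(0, 1), Or.inr one_pos⟩ (Subtype.ext (by ext <;> simp))
    simp at this
    omega
  · intro h
    refine ⟨by omega, fun q r hqr => ?_⟩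
    have := congrArg (fun s : Nsub => (s : ℤ × ℤ).2) hqr
    have := snd_nonneg q
    have := snd_nonneg r
    simp only [AddSubmonoid.coe_add, Prod.snd_add] at *
    omega

end Nsub

namespace MN

theorem isAddAtom_iff {x : MN} : IsAddAtom x ↔ x = aTwo ∨ x = aThree ∨ ∃ n, x = en1 n := by
  rw [Prod.isAddAtom_iff, Mnum.isAddAtom_iff, Nsub.isAddAtom_iff]
  obtain ⟨⟨m, hm⟩, ⟨⟨p, q⟩, hpq⟩⟩ := x
  simp [aTwo, aThree, en1, Prod.ext_iff, Subtype.ext_iff, or_and_right, or_assoc]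

theorem isAddAtom_aTwo : IsAddAtom aTwo := isAddAtom_iff.mpr (.inl rfl)

theorem isAddAtom_aThree : IsAddAtom aThree := isAddAtom_iff.mpr (.inr (.inl rfl))

theorem isAddAtom_en1 (n : ℤ) : IsAddAtom (en1 n) := isAddAtom_iff.mpr (.inr (.inr ⟨n, rfl⟩))

theorem en1_add_en1_neg (n : ℤ) : en1 n + en1 (-n) = x02 := by
  ext <;> simp [en1, x02]

theorem en1_injective : Function.Injective en1 := by
  intro m n h
  simpa [en1] using congrArg (fun x : MN => (x.2 : ℤ × ℤ).1) h

theorem fst_ne_fst_add_one_of_addDvd {a x : MN} (h : AddDvd a x) : (x.1 : ℕ) ≠ a.1 + 1 := by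
  obtain ⟨c, rfl⟩ := h
  simpa using Mnum.mem_iff.mp c.1.2

theorem not_isAddPrime_aTwo : ¬IsAddPrime aTwo := by
  intro h
  have : AddDvd aTwo (aThree + aThree) := ⟨(⟨4, Mnum.mem_iff.mpr (by decide)⟩, 0), rfl⟩
  rcases h.2 _ _ this with h | h <;> exact fst_ne_fst_add_one_of_addDvd h rfl

theorem not_isAddPrime_aThree : ¬IsAddPrime aThree := by
  intro h
  let four : MN := (⟨4, Mnum.mem_iff.mpr (by decide)⟩, 0)
  have : AddDvd aThree (four + four) := ⟨(⟨5, Mnum.mem_iff.mpr (by decide)⟩, 0), rfl⟩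
  rcases h.2 _ _ this with h | h <;> exact fst_ne_fst_add_one_of_addDvd h rfl

def weight (k : ℤ) : MN →+ ℤ :=
  AddMonoidHom.mk' (fun x => (x.1 : ℕ) + k * (x.2 : ℤ × ℤ).2) fun x y => by
    simp only [Prod.fst_add, Prod.snd_add, AddSubmonoid.coe_add]
    push_cast
    ring

theorem weight_apply (k : ℤ) (x : MN) : weight k x = (x.1 : ℕ) + k * (x.2 : ℤ × ℤ).2 := rfl

theorem weight_one_pos {x : MN} (hx : x ≠ 0) : 0 < weight 1 x := by
  have := Nsub.snd_nonneg x.2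
  rw [weight_apply, one_mul]
  by_contra! h
  refine hx (Prod.ext (Subtype.ext ?_) (Nsub.eq_zero_iff.mpr ?_))
  · change (x.1 : ℕ) = 0
    omega
  · omega

theorem weight_three_of_isAddAtom {b : MN} (hb : IsAddAtom b) (hne : b ≠ aTwo) :
    weight 3 b = 3 := by
  rcases isAddAtom_iff.mp hb with rfl | rfl | ⟨n, rfl⟩
  · exact absurd rfl hne
  · rfl
  · simp [weight_apply, en1]

theorem weight_two_of_isAddAtom {b : MN} (hb : IsAddAtom b) (hne : b ≠ aThree) :
    weight 2 b = 2 := by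
  rcases isAddAtom_iff.mp hb with rfl | rfl | ⟨n, rfl⟩
  · rfl
  · exact absurd rfl hne
  · simp [weight_apply, en1]

end MN

/-- For `M = ℕ₀ \ {1}` and `N = {(0,0)} ∪ (ℤ × ℕ) ⊆ ℤ²`, the monoid `M × N` is
atomic and is a PLS monoid (`(2,(0,0))` is purely long and `(3,(0,0))` is purely
short), but it is not a finite factorization monoid: the infinitely many pairwise
distinct atoms `(0,(n,1))`, `n ∈ ℤ`, all divide the element `(0,(0,2))`. -/
theorem example_plsm_not_ffm :
    IsAddAtomic MN ∧
    IsPurelyLong aTwo ∧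
    IsPurelyShort aThree ∧
    (∀ n : ℤ, IsAddAtom (en1 n) ∧ AddDvd (en1 n) x02) ∧
    Function.Injective en1 ∧
    ¬IsFFM MN := by
  have hdvd (n : ℤ) : IsAddAtom (en1 n) ∧ AddDvd (en1 n) x02 :=
    ⟨MN.isAddAtom_en1 n, en1 (-n), (MN.en1_add_en1_neg n).symm⟩
  refine ⟨isAddAtomic_of_pos_hom (MN.weight 1) fun _ => MN.weight_one_pos,
    ⟨MN.isAddAtom_aTwo, MN.not_isAddPrime_aTwo, fun _ _ _ h₁ h₂ hirr ha => ?_⟩,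
    ⟨MN.isAddAtom_aThree, MN.not_isAddPrime_aThree, fun _ _ _ h₁ h₂ hirr ha => ?_⟩,
    hdvd, MN.en1_injective, fun hffm => ?_⟩
  · exact card_lt_card_of_weight_lt (MN.weight 3) three_pos (by decide)
      (fun _ => MN.weight_three_of_isAddAtom) h₁ h₂ ha (hirr _ ha)
  · exact card_lt_card_of_lt_weight (MN.weight 2) two_pos (by decide)
      (fun _ => MN.weight_two_of_isAddAtom) h₁ h₂ ha (hirr _ ha)
  · exact Set.infinite_of_injective_forall_mem MN.en1_injective hdvd
      (hffm.finite_setOf_isAddAtom_addDvd x02)
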